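/- For every real inner product space and every family of vectors (V_w), and at every grade n: ‖id‖² = ‖½(id−S)‖² + ‖½(id+S)‖², where the inner product (and hence the norm) is taken over the words of length n. -/

import Mathlib

open Finsupp

/-- Words over the alphabet `A = {0,1,…,d}`. -/
abbrev Word (d : ℕ) : Type := List (Fin (d+1))

/-- The free real vector space with basis the set of all words. -/
abbrev KA (d : ℕ) : Type := Word d →₀ ℝ

/-- Shuffle product of two words, as an element of `KA d`. -/
noncomputable def shuffleWord (d : ℕ) : Word d → Word d → KA d
  | [], v => Finsupp.single v 1
  | a :: u, [] => Finsupp.single (a :: u) 1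
  | a :: u, b :: v =>
      Finsupp.mapDomain (List.cons a) (shuffleWord d u (b :: v)) +
      Finsupp.mapDomain (List.cons b) (shuffleWord d (a :: u) v)
  termination_by u v => u.length + v.length

/-- Bilinear extension of the shuffle product to `KA d`. -/
noncomputable def sh (d : ℕ) (x y : KA d) : KA d :=
  x.sum fun u cu => y.sum fun v cv => (cu * cv) • shuffleWord d u v

/-- Admissible words: concatenations of blocks each of which is the single
letter `0` or a pair `aa` with `a ≠ 0`. -/
inductive Admissible (d : ℕ) : Word d → Prop
  | nil : Admissible d []
  | zero {w : Word d} : Admissible d w → Admissible d (0 :: w)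
  | pair {w : Word d} (a : Fin (d+1)) : a ≠ 0 → Admissible d w →
      Admissible d (a :: a :: w)

/-- Number of `0` letters. -/
def zc (d : ℕ) (w : Word d) : ℕ := w.count 0

/-- Half the number of nonzero letters. -/
def dc (d : ℕ) (w : Word d) : ℕ := (w.length - w.count 0) / 2

def nc (d : ℕ) (w : Word d) : ℕ := zc d w + dc d w

open Classical in
/-- The expectation map on words. -/
noncomputable def Ebar (d : ℕ) (t : ℝ) (w : Word d) : ℝ :=
  if Admissible d w then t ^ nc d w / (2 ^ dc d w * Nat.factorial (nc d w)) else 0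

/-- Linear extension of the expectation map to `KA d`. -/
noncomputable def EbarL (d : ℕ) (t : ℝ) (x : KA d) : ℝ :=
  x.sum fun w c => c * Ebar d t w

/-- The linear endomorphism of `KA d` determined by values on basis words. -/
noncomputable def wordLift (d : ℕ) (f : Word d → KA d) : KA d →ₗ[ℝ] KA d :=
  Finsupp.lsum ℝ fun w => LinearMap.toSpanSingleton ℝ (KA d) (f w)

/-- The identity endomorphism `id`. -/
noncomputable def idE (d : ℕ) : KA d →ₗ[ℝ] KA d := LinearMap.id

/-- The reversal endomorphism `|S|`. -/
noncomputable def revE (d : ℕ) : KA d →ₗ[ℝ] KA d :=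
  wordLift d fun w => Finsupp.single w.reverse 1

/-- The antipode `S`. -/
noncomputable def Sa (d : ℕ) : KA d →ₗ[ℝ] KA d :=
  wordLift d fun w => Finsupp.single w.reverse ((-1 : ℝ) ^ w.length)

/-- The convolution unit `ν`. -/
noncomputable def nuE (d : ℕ) : KA d →ₗ[ℝ] KA d :=
  wordLift d fun w => if w = [] then Finsupp.single ([] : Word d) 1 else 0

/-- The expectation endomorphism `E`. -/
noncomputable def EE (d : ℕ) (t : ℝ) : KA d →ₗ[ℝ] KA d :=
  wordLift d fun w => Finsupp.single ([] : Word d) (Ebar d t w)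

/-- The convolution product `X ⋆ Y`. -/
noncomputable def conv (d : ℕ) (X Y : KA d →ₗ[ℝ] KA d) : KA d →ₗ[ℝ] KA d :=
  wordLift d fun w => ∑ k ∈ Finset.range (w.length + 1),
    sh d (X (Finsupp.single (w.take k) 1)) (Y (Finsupp.single (w.drop k) 1))

/-- Convolution powers, `X^{⋆0} = ν`. -/
noncomputable def convPow (d : ℕ) (X : KA d →ₗ[ℝ] KA d) : ℕ → (KA d →ₗ[ℝ] KA d)
  | 0 => nuE d
  | k + 1 => conv d X (convPow d X k)

/-- The inner product `⟨X,Y⟩` of endomorphisms, taken over the words of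
length `n`, relative to the family of vectors `Vf`. -/
noncomputable def ip (d : ℕ) (t : ℝ) {H : Type*} [NormedAddCommGroup H]
    [InnerProductSpace ℝ H] (Vf : Word d → H) (n : ℕ)
    (X Y : KA d →ₗ[ℝ] KA d) : ℝ :=
  ∑ u : Fin n → Fin (d+1), ∑ v : Fin n → Fin (d+1),
    EbarL d t (sh d (X (Finsupp.single (List.ofFn u) 1))
                    (Y (Finsupp.single (List.ofFn v) 1))) *
      (inner ℝ (Vf (List.ofFn u)) (Vf (List.ofFn v)) : ℝ)

/-- Positive semidefiniteness of the expectation Gram matrix at grade `n`: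
indexed by the words of length `n` together with the empty word. -/
def gramPSD (d n : ℕ) (t : ℝ) : Prop :=
  ∀ c : Option (Fin n → Fin (d+1)) → ℝ,
    0 ≤ ∑ x : Option (Fin n → Fin (d+1)), ∑ y : Option (Fin n → Fin (d+1)),
      c x * c y *
        EbarL d t (shuffleWord d (x.elim ([] : Word d) List.ofFn)
                                 (y.elim ([] : Word d) List.ofFn))

/-!
Expanding bilinearly, `‖½(id - S)‖² + ‖½(id + S)‖² = ½‖id‖² + ½‖S‖²`: the cross terms cancel.
And `‖S‖² = ‖id‖²`, because for words `u`, `v` of equal length `S u ⧢ S v` is the reversal of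
`u ⧢ v` (the signs cancel and shuffling commutes with reversal), while `Ē` is invariant under
reversal (the reverse of an admissible word is admissible, with the same letter counts).
-/

lemma LinearMap.apply_self_eq_half_sub_add_half_add {K M : Type*} [Field K] [NeZero (2 : K)]
    [AddCommGroup M] [Module K M] (B : M →ₗ[K] M →ₗ[K] K) {x s : M} (h : B s s = B x x) :
    B x x = B ((1 / 2 : K) • (x - s)) ((1 / 2 : K) • (x - s))
      + B ((1 / 2 : K) • (x + s)) ((1 / 2 : K) • (x + s)) := by
  simp only [map_smul, map_sub, map_add, LinearMap.smul_apply, LinearMap.sub_apply,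
    LinearMap.add_apply, smul_eq_mul, h]
  field_simp
  ring

lemma mapDomain_cons_append_singleton {α M : Type*} [AddCommMonoid M] (a b : α)
    (x : List α →₀ M) :
    mapDomain (· ++ [b]) (mapDomain (List.cons a) x) =
      mapDomain (List.cons a) (mapDomain (· ++ [b]) x) := by
  rw [← mapDomain_comp, ← mapDomain_comp]
  exact mapDomain_congr fun w _ => rfl

section

variable {d : ℕ}

lemma shuffleWord_nil_left (v : Word d) : shuffleWord d [] v = single v 1 := by
  rw [shuffleWord]

lemma shuffleWord_nil_right (u : Word d) : shuffleWord d u [] = single u 1 := by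
  cases u <;> rw [shuffleWord]

lemma shuffleWord_cons_cons (a b : Fin (d+1)) (u v : Word d) :
    shuffleWord d (a :: u) (b :: v) =
      mapDomain (List.cons a) (shuffleWord d u (b :: v)) +
      mapDomain (List.cons b) (shuffleWord d (a :: u) v) := by
  rw [shuffleWord]

lemma shuffleWord_append_singleton (u v : Word d) (a b : Fin (d+1)) :
    shuffleWord d (u ++ [a]) (v ++ [b]) =
      mapDomain (· ++ [a]) (shuffleWord d u (v ++ [b])) +
      mapDomain (· ++ [b]) (shuffleWord d (u ++ [a]) v) := by
  match u, v with
  | [], [] =>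
      simp only [List.nil_append, shuffleWord_nil_left, shuffleWord_nil_right,
        shuffleWord_cons_cons, mapDomain_single]
      exact add_comm _ _
  | [], e :: v' =>
      have ih := shuffleWord_append_singleton ([] : Word d) v' a b
      simp only [List.nil_append, List.cons_append] at ih ⊢
      rw [shuffleWord_cons_cons, ih, shuffleWord_cons_cons]
      simp only [shuffleWord_nil_left, mapDomain_add, mapDomain_single, List.cons_append,
        mapDomain_cons_append_singleton]
      abel
  | c :: u', [] =>
      have ih := shuffleWord_append_singleton u' ([] : Word d) a b
      simp only [List.nil_append, List.cons_append] at ih ⊢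
      rw [shuffleWord_cons_cons, ih, shuffleWord_cons_cons]
      simp only [shuffleWord_nil_right, mapDomain_add, mapDomain_single, List.cons_append,
        mapDomain_cons_append_singleton]
      abel
  | c :: u', e :: v' =>
      have ih₁ := shuffleWord_append_singleton u' (e :: v') a b
      have ih₂ := shuffleWord_append_singleton (c :: u') v' a b
      simp only [List.cons_append] at ih₁ ih₂ ⊢
      rw [shuffleWord_cons_cons, ih₁, ih₂]
      conv_rhs => rw [shuffleWord_cons_cons, shuffleWord_cons_cons]
      simp only [mapDomain_add, mapDomain_cons_append_singleton]
      abel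
  termination_by u.length + v.length
  decreasing_by all_goals (simp only [List.length_cons]; omega)

lemma mapDomain_reverse_shuffleWord (u v : Word d) :
    mapDomain List.reverse (shuffleWord d u v) = shuffleWord d u.reverse v.reverse := by
  match u, v with
  | [], v => rw [shuffleWord_nil_left, mapDomain_single, List.reverse_nil, shuffleWord_nil_left]
  | c :: u', [] =>
      rw [shuffleWord_nil_right, mapDomain_single, List.reverse_nil, shuffleWord_nil_right]
  | c :: u', e :: v' =>
      have ih₁ := mapDomain_reverse_shuffleWord u' (e :: v')
      have ih₂ := mapDomain_reverse_shuffleWord (c :: u') v'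
      have reverse_comp_cons (a : Fin (d+1)) :
          List.reverse ∘ List.cons a = (· ++ [a]) ∘ (List.reverse : Word d → Word d) := by
        funext w; simp
      rw [shuffleWord_cons_cons, mapDomain_add, ← mapDomain_comp, ← mapDomain_comp,
        reverse_comp_cons, reverse_comp_cons, mapDomain_comp, mapDomain_comp, ih₁, ih₂,
        List.reverse_cons, List.reverse_cons, shuffleWord_append_singleton]
  termination_by u.length + v.length
  decreasing_by all_goals (simp only [List.length_cons]; omega)

lemma Admissible.append {w v : Word d} (hw : Admissible d w) (hv : Admissible d v) :
    Admissible d (w ++ v) := by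
  induction hw with
  | nil => exact hv
  | zero _ ih => exact .zero ih
  | pair a ha _ ih => exact .pair a ha ih

lemma Admissible.reverse {w : Word d} (hw : Admissible d w) : Admissible d w.reverse := by
  induction hw with
  | nil => exact .nil
  | zero _ ih => simpa using ih.append (.zero .nil)
  | pair a ha _ ih => simpa using ih.append (.pair a ha .nil)

lemma admissible_reverse_iff {w : Word d} : Admissible d w.reverse ↔ Admissible d w :=
  ⟨fun h => by simpa using h.reverse, Admissible.reverse⟩

lemma Ebar_reverse (t : ℝ) (w : Word d) : Ebar d t w.reverse = Ebar d t w := by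
  simp only [Ebar, nc, zc, dc, List.count_reverse, List.length_reverse]
  congr 1
  exact propext admissible_reverse_iff

lemma EbarL_eq_linearCombination (t : ℝ) (x : KA d) :
    EbarL d t x = linearCombination ℝ (Ebar d t) x := rfl

lemma EbarL_mapDomain_reverse (t : ℝ) (x : KA d) :
    EbarL d t (mapDomain List.reverse x) = EbarL d t x := by
  rw [EbarL_eq_linearCombination, linearCombination_mapDomain, EbarL_eq_linearCombination]
  congr 2
  funext w
  exact Ebar_reverse t w

lemma sh_single_single (u v : Word d) (c c' : ℝ) :
    sh d (single u c) (single v c') = (c * c') • shuffleWord d u v := by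
  unfold sh
  rw [sum_single_index (by simp), sum_single_index (by simp)]

lemma sh_add_left (x x' y : KA d) : sh d (x + x') y = sh d x y + sh d x' y := by
  unfold sh
  rw [sum_add_index' (by simp) fun u c c' => ?_]
  rw [← sum_add]
  exact sum_congr fun v _ => by rw [add_mul, add_smul]

lemma sh_add_right (x y y' : KA d) : sh d x (y + y') = sh d x y + sh d x y' := by
  unfold sh
  rw [← sum_add]
  refine sum_congr fun u _ => ?_
  rw [sum_add_index' (by simp) fun v c c' => by rw [mul_add, add_smul]]

lemma sh_smul_left (c : ℝ) (x y : KA d) : sh d (c • x) y = c • sh d x y := by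
  unfold sh
  rw [sum_smul_index (by simp), smul_sum]
  refine sum_congr fun u _ => ?_
  rw [smul_sum]
  exact sum_congr fun v _ => by rw [smul_smul, mul_assoc]

lemma sh_smul_right (c : ℝ) (x y : KA d) : sh d x (c • y) = c • sh d x y := by
  unfold sh
  rw [smul_sum]
  refine sum_congr fun u _ => ?_
  rw [sum_smul_index (by simp), smul_sum]
  exact sum_congr fun v _ => by rw [smul_smul, mul_left_comm]

lemma EbarL_add (t : ℝ) (x y : KA d) : EbarL d t (x + y) = EbarL d t x + EbarL d t y := by
  simp only [EbarL_eq_linearCombination, map_add]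

lemma EbarL_smul (t c : ℝ) (x : KA d) : EbarL d t (c • x) = c * EbarL d t x := by
  simp only [EbarL_eq_linearCombination, map_smul, smul_eq_mul]

lemma Sa_single (w : Word d) : Sa d (single w 1) = single w.reverse ((-1 : ℝ) ^ w.length) := by
  simp [Sa, wordLift]

lemma EbarL_sh_Sa_Sa (t : ℝ) {u v : Word d} (h : u.length = v.length) :
    EbarL d t (sh d (Sa d (single u 1)) (Sa d (single v 1)))
      = EbarL d t (sh d (single u 1) (single v 1)) := by
  rw [Sa_single, Sa_single, sh_single_single, sh_single_single, h, ← pow_add,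
    Even.neg_one_pow ⟨_, rfl⟩, ← mapDomain_reverse_shuffleWord, EbarL_smul, EbarL_smul,
    EbarL_mapDomain_reverse, mul_one]

end

noncomputable def ipBilin (d : ℕ) (t : ℝ) {H : Type*} [NormedAddCommGroup H]
    [InnerProductSpace ℝ H] (Vf : Word d → H) (n : ℕ) :
    (KA d →ₗ[ℝ] KA d) →ₗ[ℝ] (KA d →ₗ[ℝ] KA d) →ₗ[ℝ] ℝ :=
  LinearMap.mk₂ ℝ (ip d t Vf n)
    (fun X X' Y => by
      simp only [ip, LinearMap.add_apply, sh_add_left, EbarL_add, add_mul,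
        Finset.sum_add_distrib])
    (fun c X Y => by
      simp only [ip, LinearMap.smul_apply, sh_smul_left, EbarL_smul, mul_assoc, Finset.mul_sum,
        smul_eq_mul])
    (fun X Y Y' => by
      simp only [ip, LinearMap.add_apply, sh_add_right, EbarL_add, add_mul,
        Finset.sum_add_distrib])
    (fun c X Y => by
      simp only [ip, LinearMap.smul_apply, sh_smul_right, EbarL_smul, mul_assoc, Finset.mul_sum,
        smul_eq_mul])

lemma ip_Sa_Sa {d : ℕ} (t : ℝ) {H : Type*} [NormedAddCommGroup H] [InnerProductSpace ℝ H]
    (Vf : Word d → H) (n : ℕ) : ip d t Vf n (Sa d) (Sa d) = ip d t Vf n (idE d) (idE d) := by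
  unfold ip
  refine Finset.sum_congr rfl fun u _ => Finset.sum_congr rfl fun v _ => ?_
  rw [EbarL_sh_Sa_Sa t (by simp)]
  rfl

theorem stmt_12_general (d n : ℕ) (t : ℝ)
    {H : Type*} [NormedAddCommGroup H] [InnerProductSpace ℝ H]
    (Vf : Word d → H) :
    ip d t Vf n (idE d) (idE d)
      = ip d t Vf n ((1 / 2 : ℝ) • (idE d - Sa d)) ((1 / 2 : ℝ) • (idE d - Sa d))
        + ip d t Vf n ((1 / 2 : ℝ) • (idE d + Sa d)) ((1 / 2 : ℝ) • (idE d + Sa d)) :=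
  (ipBilin d t Vf n).apply_self_eq_half_sub_add_half_add (x := idE d) (s := Sa d)
    (ip_Sa_Sa t Vf n)

theorem stmt_12 (d n : ℕ) (hd : 1 ≤ d) (hn : 1 ≤ n) (t : ℝ) (ht : 0 < t)
    {H : Type*} [NormedAddCommGroup H] [InnerProductSpace ℝ H]
    (Vf : Word d → H) :
    ip d t Vf n (idE d) (idE d)
      = ip d t Vf n ((1 / 2 : ℝ) • (idE d - Sa d)) ((1 / 2 : ℝ) • (idE d - Sa d))
        + ip d t Vf n ((1 / 2 : ℝ) • (idE d + Sa d)) ((1 / 2 : ℝ) • (idE d + Sa d)) :=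
  stmt_12_general d n t Vf
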